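/- Define F : ℝ³ → ℝ by F(d₁, d₂, d₃) = Σ_{i=1}^{3} (1/4)·√(dᵢ²·(dᵢ + 2)·(2 − dᵢ)) + (1/4)·√((d₁ + d₂ + d₃)·(−d₁ + d₂ + d₃)·(d₁ − d₂ + d₃)·(d₁ + d₂ − d₃)). Then F(√3, √3, √3) = 3·√3/2, F is differentiable at the point (√3, √3, √3), and its (Fréchet) derivative at that point is the zero linear map; in particular all three partial derivatives of F vanish at (√3, √3, √3). -/

import Mathlib

noncomputable def hexagonAreaF : ℝ × ℝ × ℝ → ℝ := fun p =>
  (1 / 4) * Real.sqrt (p.1 ^ 2 * (p.1 + 2) * (2 - p.1)) +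
  (1 / 4) * Real.sqrt (p.2.1 ^ 2 * (p.2.1 + 2) * (2 - p.2.1)) +
  (1 / 4) * Real.sqrt (p.2.2 ^ 2 * (p.2.2 + 2) * (2 - p.2.2)) +
  (1 / 4) * Real.sqrt ((p.1 + p.2.1 + p.2.2) * (-p.1 + p.2.1 + p.2.2) *
    (p.1 - p.2.1 + p.2.2) * (p.1 + p.2.1 - p.2.2))

/-!
Split `F` as `g d₁ + g d₂ + g d₃ + H(d₁, d₂, d₃)`, where `g d = (d/4)√(4 - d²)` is the area of the
isosceles triangle with legs `1` and base `d` and `H` is Heron's formula for the triangle with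
sides `d₁, d₂, d₃`. At a point `(s, s, s)` both pieces have gradient along `(1, 1, 1)`:
`g'(s) = (2 - s²)/(2√(4 - s²))`, and the equilateral triangle of side `s` has `∂H/∂dᵢ = s/(2√3)`.
At `s = √3` these are `-1/2` and `1/2`.
-/

open Real ContinuousLinearMap

noncomputable def isoscelesArea (d : ℝ) : ℝ := 1 / 4 * √(d ^ 2 * (d + 2) * (2 - d))

def heronRadicand (p : ℝ × ℝ × ℝ) : ℝ :=
  (p.1 + p.2.1 + p.2.2) * (-p.1 + p.2.1 + p.2.2) * (p.1 - p.2.1 + p.2.2) * (p.1 + p.2.1 - p.2.2)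

noncomputable def heronArea (p : ℝ × ℝ × ℝ) : ℝ := 1 / 4 * √(heronRadicand p)

theorem hexagonAreaF_eq (p : ℝ × ℝ × ℝ) :
    hexagonAreaF p = isoscelesArea p.1 + isoscelesArea p.2.1 + isoscelesArea p.2.2 + heronArea p :=
  rfl

theorem isoscelesArea_eq {d : ℝ} (hd : 0 ≤ d) : isoscelesArea d = d / 4 * √(4 - d ^ 2) := by
  rw [isoscelesArea, show d ^ 2 * (d + 2) * (2 - d) = d ^ 2 * (4 - d ^ 2) by ring,
    sqrt_mul (sq_nonneg d), sqrt_sq hd]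
  ring

theorem hasDerivAt_isoscelesArea {d : ℝ} (hd₀ : 0 < d) (hd₂ : d < 2) :
    HasDerivAt isoscelesArea ((2 - d ^ 2) / (2 * √(4 - d ^ 2))) d := by
  have hrad : HasDerivAt (fun x : ℝ => x ^ 2 * (x + 2) * (2 - x)) (8 * d - 4 * d ^ 3) d := by
    refine (((hasDerivAt_pow 2 d).mul ((hasDerivAt_id d).add_const 2)).mul
      ((hasDerivAt_id d).const_sub 2)).congr_deriv ?_
    simp only [id, Pi.mul_apply]
    norm_num
    ring
  refine ((hrad.sqrt (by have := sub_pos.2 hd₂; positivity)).const_mul (1 / 4)).congr_deriv ?_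
  rw [show d ^ 2 * (d + 2) * (2 - d) = d ^ 2 * (4 - d ^ 2) by ring,
    sqrt_mul (sq_nonneg d), sqrt_sq hd₀.le]
  field_simp
  ring

def coordSum : ℝ × ℝ × ℝ →L[ℝ] ℝ :=
  fst ℝ ℝ (ℝ × ℝ) + (fst ℝ ℝ ℝ).comp (snd ℝ ℝ (ℝ × ℝ)) + (snd ℝ ℝ ℝ).comp (snd ℝ ℝ (ℝ × ℝ))

theorem heronRadicand_diag (s : ℝ) : heronRadicand (s, s, s) = 3 * s ^ 4 := by
  simp only [heronRadicand]; ring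

theorem heronArea_diag (s : ℝ) : heronArea (s, s, s) = √3 / 4 * s ^ 2 := by
  rw [heronArea, heronRadicand_diag, sqrt_mul' _ (by positivity),
    show s ^ 4 = (s ^ 2) ^ 2 by ring, sqrt_sq (by positivity)]
  ring

theorem hasFDerivAt_heronRadicand_diag (s : ℝ) :
    HasFDerivAt heronRadicand ((4 * s ^ 3) • coordSum) (s, s, s) := by
  have hsnd := hasFDerivAt_snd (𝕜 := ℝ) (p := ((s, s, s) : ℝ × ℝ × ℝ))
  have hx := hasFDerivAt_fst (𝕜 := ℝ) (p := ((s, s, s) : ℝ × ℝ × ℝ))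
  have hy := hasFDerivAt_fst.comp _ hsnd
  have hz := hasFDerivAt_snd.comp _ hsnd
  refine HasFDerivAt.congr_fderiv (f := heronRadicand) ((((hx.add hy).add hz).mul
    ((hx.neg.add hy).add hz)).mul ((hx.sub hy).add hz) |>.mul ((hx.add hy).sub hz)) ?_
  ext <;> simp [coordSum] <;> ring

theorem hasFDerivAt_heronArea_diag {s : ℝ} (hs : 0 < s) :
    HasFDerivAt heronArea ((s / (2 * √3)) • coordSum) (s, s, s) := by
  have hrad := (hasFDerivAt_heronRadicand_diag s).sqrt (by rw [heronRadicand_diag]; positivity)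
  refine (hrad.const_mul (1 / 4)).congr_fderiv ?_
  rw [heronRadicand_diag, smul_smul, smul_smul, sqrt_mul' _ (by positivity),
    show s ^ 4 = (s ^ 2) ^ 2 by ring, sqrt_sq (by positivity)]
  congr 1
  field_simp

theorem hasFDerivAt_hexagonAreaF_diag {s : ℝ} (hs₀ : 0 < s) (hs₂ : s < 2) :
    HasFDerivAt hexagonAreaF
      (((2 - s ^ 2) / (2 * √(4 - s ^ 2)) + s / (2 * √3)) • coordSum) (s, s, s) := by
  have hside := hasDerivAt_isoscelesArea hs₀ hs₂
  have hsnd := hasFDerivAt_snd (𝕜 := ℝ) (p := ((s, s, s) : ℝ × ℝ × ℝ))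
  have h₁ := hside.comp_hasFDerivAt _ (hasFDerivAt_fst (𝕜 := ℝ) (p := ((s, s, s) : ℝ × ℝ × ℝ)))
  have h₂ := hside.comp_hasFDerivAt _ (hasFDerivAt_fst.comp _ hsnd)
  have h₃ := hside.comp_hasFDerivAt _ (hasFDerivAt_snd.comp _ hsnd)
  refine (((h₁.add h₂).add h₃).add (hasFDerivAt_heronArea_diag hs₀)).congr_fderiv ?_
  rw [coordSum, add_smul]
  module

/-- `F(√3, √3, √3) = 3√3/2`, and `F` is differentiable at `(√3, √3, √3)` with Fréchet
derivative the zero linear map (so in particular all partial derivatives vanish there). -/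
theorem hexagonAreaF_critical_at_regular :
    hexagonAreaF (Real.sqrt 3, Real.sqrt 3, Real.sqrt 3) = 3 * Real.sqrt 3 / 2 ∧
    HasFDerivAt hexagonAreaF (0 : ℝ × ℝ × ℝ →L[ℝ] ℝ)
      (Real.sqrt 3, Real.sqrt 3, Real.sqrt 3) := by
  have h3 : √3 ^ 2 = 3 := sq_sqrt (by norm_num)
  have h4 : 4 - √3 ^ 2 = 1 := by rw [h3]; norm_num
  refine ⟨?_, ?_⟩
  · rw [hexagonAreaF_eq, isoscelesArea_eq (sqrt_nonneg 3), heronArea_diag, h4, h3, sqrt_one]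
    ring
  · have hcoeff : (2 - √3 ^ 2) / (2 * √(4 - √3 ^ 2)) + √3 / (2 * √3) = 0 := by
      rw [h4, h3, sqrt_one]
      field_simp
      norm_num
    have hderiv := hasFDerivAt_hexagonAreaF_diag (s := √3) (by positivity) (by nlinarith)
    rwa [hcoeff, zero_smul] at hderiv
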